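/- For every irreducible fraction x = p/q with 0 < x < 1 and every k ≥ 5, the degree distributions of the Haros graphs G_x and G_{F(x)}, where F(x) = x/(1+x) = p/(p+q), satisfy the scaling equation P(k+1, F(x)) = P(k, x)/(1 + x), i.e. P(k, x) = (1 + x)·P(k+1, x/(1+x)). -/

import Mathlib

/-- Symbols for paths in the Farey binary tree. -/
inductive LR
  | L
  | R
deriving DecidableEq

/-- One step in the Farey binary tree: update the current pair of fractions
(represented as pairs (numerator, denominator) of naturals). -/
def fareyStep : ((ℕ × ℕ) × (ℕ × ℕ)) → LR → ((ℕ × ℕ) × (ℕ × ℕ))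
  | ((a, b), (c, d)), LR.L => ((a, b), (a + c, b + d))
  | ((a, b), (c, d)), LR.R => ((a + c, b + d), (c, d))

/-- The final pair of fractions of a word: after reading the first symbol `L`
the current pair is (0/1, 1/1); the remaining symbols update it. -/
def finalPair (w : List LR) : (ℕ × ℕ) × (ℕ × ℕ) :=
  w.tail.foldl fareyStep ((0, 1), (1, 1))

/-- The value ⟨w⟩ of a word: the mediant of its final pair, as (numerator, denominator). -/
def value (w : List LR) : ℕ × ℕ :=
  ((finalPair w).1.1 + (finalPair w).2.1, (finalPair w).1.2 + (finalPair w).2.2)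

/-- A word over {L,R} is a Farey word when its first symbol is `L`. -/
def IsFareyWord (w : List LR) : Prop := w.head? = some LR.L

/-- Concatenation of degree sequences:
[a₁,…,a_s] ⊕ [b₁,…,b_t] = [a₁+1, a₂, …, a_{s−1}, a_s+b₁, b₂, …, b_{t−1}, b_t+1]. -/
def oplus (A B : List ℕ) : List ℕ :=
  (A.dropLast.modifyHead (· + 1)) ++ [A.getLastD 0 + B.headD 0] ++ B.tail.dropLast
    ++ [B.getLastD 0 + 1]

/-- Update of the pair (D(left ancestor), D(right ancestor)) of unreduced degree
sequences along one symbol. -/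
def degStep : (List ℕ × List ℕ) → LR → (List ℕ × List ℕ)
  | (A, B), LR.L => (A, oplus A B)
  | (A, B), LR.R => (oplus A B, B)

/-- The pair (D(a/b), D(c/d)) of unreduced degree sequences of the final pair of a word;
0/1 and 1/1 are both assigned the list [1,1]. -/
def degPair (w : List LR) : List ℕ × List ℕ :=
  w.tail.foldl degStep ([1, 1], [1, 1])

/-- The unreduced degree sequence D(⟨w⟩) = D(a/b) ⊕ D(c/d) of the value of a word. -/
def Dseq (w : List LR) : List ℕ :=
  oplus (degPair w).1 (degPair w).2

/-- Reduction: [k₁,…,k_{q+1}] becomes [k₂,…,k_q, k₁+k_{q+1}]; the last entry is the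
boundary degree and the remaining ones are the inner degrees. -/
def reduce (D : List ℕ) : List ℕ :=
  D.tail.dropLast ++ [D.headD 0 + D.getLastD 0]

/-- The reduced degree sequence of the Haros graph G_{⟨w⟩}. -/
def degSeq (w : List LR) : List ℕ := reduce (Dseq w)

/-- Degree-distribution entropy S of the Haros graph G_{⟨w⟩}:
S = −Σ_k P(k)·ln P(k), summed over the degree values occurring in the reduced
degree sequence, where P(k) = m(k)/q. -/
noncomputable def Sent (w : List LR) : ℝ :=
  -∑ k ∈ (degSeq w).toFinset,
    (((degSeq w).count k : ℝ) / ((value w).2 : ℝ)) *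
      Real.log (((degSeq w).count k : ℝ) / ((value w).2 : ℝ))

/-- Reduced entropy H of the Haros graph G_{⟨w⟩} (with the convention 0·ln 0 = 0,
automatic since Real.log 0 = 0). -/
noncomputable def Hent (w : List LR) : ℝ :=
  let x : ℝ := ((value w).1 : ℝ) / ((value w).2 : ℝ)
  if x ≤ 1 / 2 then
    Sent w + 2 * x * Real.log x + (1 - 2 * x) * Real.log (1 - 2 * x)
  else
    Sent w + 2 * (1 - x) * Real.log (1 - x) + (2 * x - 1) * Real.log (2 * x - 1)

/-!
The map `x ↦ x/(1+x)` commutes with mediants and sends the Farey pair `(0/1, 1/1)` to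
`(0/1, 1/2)`, so the Farey path of `p/(p+q)` is that of `p/q` with one more `L` after the
leading one. Hence the degree sequences for `F(x)` are built by the same `⊕`-steps as those for
`x`, starting from `([1,1], [2,2,2])` instead of `([1,1], [1,1])`. Apart from the seeds, each
list for `F(x)` has the first entry of the matching list for `x`, its last entry plus one, and an
inner entry `k + 1` for each inner entry `k ≥ 5`; the entries created next to a seed are at most
`5`. So `m(k+1, F(x)) = m(k, x)` for `k ≥ 5`, while the denominators
are `q` and `p + q`.
-/

abbrev FareyPair := (ℕ × ℕ) × (ℕ × ℕ)

def mediant (s : FareyPair) : ℕ × ℕ := (s.1.1 + s.2.1, s.1.2 + s.2.2)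

/-- `x < y` for the fractions `x.1 / x.2` and `y.1 / y.2`, cross-multiplied. -/
def FracLT (x y : ℕ × ℕ) : Prop := x.1 * y.2 < y.1 * x.2

/-- The endpoints `a/b`, `c/d` are Farey neighbours: `bc - ad = 1`. -/
def IsUnimodular (s : FareyPair) : Prop := s.1.2 * s.2.1 = s.1.1 * s.2.2 + 1

lemma IsUnimodular.step {s : FareyPair} (hs : IsUnimodular s) (σ : LR) :
    IsUnimodular (fareyStep s σ) := by
  obtain ⟨⟨a, b⟩, ⟨c, d⟩⟩ := s
  unfold IsUnimodular at *
  cases σ <;> simp only [fareyStep] at * <;> nlinarith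

lemma IsUnimodular.foldl_fareyStep {s : FareyPair} (hs : IsUnimodular s) (v : List LR) :
    IsUnimodular (v.foldl fareyStep s) := by
  induction v generalizing s with
  | nil => exact hs
  | cons σ v ih => exact ih (hs.step σ)

lemma IsUnimodular.mediant_snd_pos {s : FareyPair} (hs : IsUnimodular s) :
    0 < (mediant s).2 := by
  obtain ⟨⟨a, b⟩, ⟨c, d⟩⟩ := s
  unfold IsUnimodular at hs
  simp only [mediant]
  rcases Nat.eq_zero_or_pos b with rfl | hb
  · simp at hs
  · omega

lemma IsUnimodular.fracLT_mediant_foldl {s : FareyPair} (hs : IsUnimodular s) (v : List LR) :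
    FracLT s.1 (mediant (v.foldl fareyStep s)) ∧ FracLT (mediant (v.foldl fareyStep s)) s.2 := by
  induction v generalizing s with
  | nil =>
    obtain ⟨⟨a, b⟩, ⟨c, d⟩⟩ := s
    unfold IsUnimodular at hs
    simp only [FracLT, mediant, List.foldl_nil]
    constructor <;> nlinarith
  | cons σ v ih =>
    obtain ⟨hl, hr⟩ := ih (hs.step σ)
    obtain ⟨⟨a, b⟩, ⟨c, d⟩⟩ := s
    unfold IsUnimodular at hs
    simp only [List.foldl_cons]
    cases σ <;> simp only [FracLT, fareyStep] at hl hr ⊢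
    · exact ⟨hl, by nlinarith⟩
    · exact ⟨by nlinarith, hr⟩

lemma IsUnimodular.fracLT_mediant_foldl_L {s : FareyPair} (hs : IsUnimodular s) (v : List LR) :
    FracLT (mediant ((LR.L :: v).foldl fareyStep s)) (mediant s) :=
  (hs.step LR.L).fracLT_mediant_foldl v |>.2

lemma IsUnimodular.fracLT_mediant_foldl_R {s : FareyPair} (hs : IsUnimodular s) (v : List LR) :
    FracLT (mediant s) (mediant ((LR.R :: v).foldl fareyStep s)) :=
  (hs.step LR.R).fracLT_mediant_foldl v |>.1

lemma IsUnimodular.foldl_injective {s : FareyPair} (hs : IsUnimodular s) {v₁ v₂ : List LR}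
    (h : mediant (v₁.foldl fareyStep s) = mediant (v₂.foldl fareyStep s)) : v₁ = v₂ := by
  induction v₁ generalizing s v₂ with
  | nil =>
    rcases v₂ with _ | ⟨_ | _, v₂⟩
    · rfl
    · exact absurd (h ▸ hs.fracLT_mediant_foldl_L v₂) (lt_irrefl _)
    · exact absurd (h ▸ hs.fracLT_mediant_foldl_R v₂) (lt_irrefl _)
  | cons σ₁ v₁ ih =>
    rcases v₂ with _ | ⟨σ₂, v₂⟩
    · cases σ₁
      · exact absurd (h ▸ hs.fracLT_mediant_foldl_L v₁) (lt_irrefl _)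
      · exact absurd (h ▸ hs.fracLT_mediant_foldl_R v₁) (lt_irrefl _)
    · cases σ₁ <;> cases σ₂
      · rw [ih (hs.step _) h]
      · exact absurd (h ▸ hs.fracLT_mediant_foldl_L v₁) (hs.fracLT_mediant_foldl_R v₂).asymm
      · exact absurd (h ▸ hs.fracLT_mediant_foldl_R v₁) (hs.fracLT_mediant_foldl_L v₂).asymm
      · rw [ih (hs.step _) h]

/-- The map `x ↦ x / (1 + x)` on both endpoints of a pair. -/
def fareyShift (s : FareyPair) : FareyPair :=
  ((s.1.1, s.1.1 + s.1.2), (s.2.1, s.2.1 + s.2.2))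

lemma fareyStep_fareyShift (s : FareyPair) (σ : LR) :
    fareyStep (fareyShift s) σ = fareyShift (fareyStep s σ) := by
  obtain ⟨⟨a, b⟩, ⟨c, d⟩⟩ := s
  cases σ <;> simp only [fareyStep, fareyShift, Prod.mk.injEq, true_and, and_true] <;> ring

lemma foldl_fareyStep_fareyShift (v : List LR) (s : FareyPair) :
    v.foldl fareyStep (fareyShift s) = fareyShift (v.foldl fareyStep s) := by
  induction v generalizing s with
  | nil => rfl
  | cons σ v ih => rw [List.foldl_cons, fareyStep_fareyShift, ih]; rfl

lemma isUnimodular_init : IsUnimodular ((0, 1), (1, 1)) := rfl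

lemma value_eq_mediant (w : List LR) :
    value w = mediant (w.tail.foldl fareyStep ((0, 1), (1, 1))) := rfl

lemma value_snd_pos (w : List LR) : 0 < (value w).2 :=
  (isUnimodular_init.foldl_fareyStep _).mediant_snd_pos

lemma tail_eq_L_cons_of_value {w w' : List LR} {p q : ℕ} (hval : value w = (p, q))
    (hval' : value w' = (p, p + q)) : w'.tail = LR.L :: w.tail := by
  have hshift : value (LR.L :: LR.L :: w.tail) = (p, p + q) := by
    rw [value_eq_mediant, List.tail_cons, List.foldl_cons,
      show fareyStep ((0, 1), (1, 1)) LR.L = fareyShift ((0, 1), (1, 1)) from rfl,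
      foldl_fareyStep_fareyShift]
    rw [value_eq_mediant] at hval
    simp only [mediant, fareyShift, Prod.mk.injEq] at hval ⊢
    omega
  exact isUnimodular_init.foldl_injective (hval'.trans hshift.symm)

def CountShift (m m' : List ℕ) : Prop := ∀ k, 5 ≤ k → m'.count (k + 1) = m.count k

lemma CountShift.append {m₁ m₁' m₂ m₂' : List ℕ} (h₁ : CountShift m₁ m₁') (h₂ : CountShift m₂ m₂') :
    CountShift (m₁ ++ m₂) (m₁' ++ m₂') := by
  intro k hk
  rw [List.count_append, List.count_append, h₁ k hk, h₂ k hk]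

lemma countShift_singleton_succ (x : ℕ) : CountShift [x] [x + 1] := by
  intro k _
  simp only [List.count_singleton, beq_iff_eq, Nat.add_right_cancel_iff]

lemma countShift_of_forall_le {m m' : List ℕ} (hm : ∀ x ∈ m, x ≤ 4) (hm' : ∀ x ∈ m', x ≤ 5) :
    CountShift m m' := by
  intro k hk
  rw [List.count_eq_zero.2 fun h => by have := hm' _ h; omega,
    List.count_eq_zero.2 fun h => by have := hm _ h; omega]

lemma dropLast_cons_concat (h l : ℕ) (m : List ℕ) : (h :: (m ++ [l])).dropLast = h :: m := by
  rw [← List.cons_append, List.dropLast_concat]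

lemma getLastD_cons_concat (h l d : ℕ) (m : List ℕ) : (h :: (m ++ [l])).getLastD d = l := by
  rw [← List.cons_append, List.getLastD_concat]

lemma oplus_cons_concat (h₁ l₁ h₂ l₂ : ℕ) (m₁ m₂ : List ℕ) :
    oplus (h₁ :: (m₁ ++ [l₁])) (h₂ :: (m₂ ++ [l₂]))
      = (h₁ + 1) :: (m₁ ++ (l₁ + h₂) :: m₂ ++ [l₂ + 1]) := by
  rw [oplus, dropLast_cons_concat, getLastD_cons_concat, getLastD_cons_concat]
  simp

lemma headD_oplus_cons_concat (h l : ℕ) (m B : List ℕ) :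
    (oplus (h :: (m ++ [l])) B).headD 0 = h + 1 := by
  simp [oplus, dropLast_cons_concat]

lemma getLastD_oplus (A B : List ℕ) : (oplus A B).getLastD 0 = B.getLastD 0 + 1 := by
  rw [oplus, List.getLastD_concat]

def ShiftRel (i j : ℕ) (A A' : List ℕ) : Prop :=
  ∃ h l m m', A = h :: (m ++ [l]) ∧ A' = (h + i) :: (m' ++ [l + j]) ∧ CountShift m m'

lemma ShiftRel.oplus {i j i' j' : ℕ} {A A' B B' : List ℕ} (hA : ShiftRel i j A A')
    (hB : ShiftRel i' j' B B')
    (hx : CountShift [A.getLastD 0 + B.headD 0] [A'.getLastD 0 + B'.headD 0]) :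
    ShiftRel i j' (oplus A B) (oplus A' B') := by
  obtain ⟨h₁, l₁, m₁, m₁', rfl, rfl, hm₁⟩ := hA
  obtain ⟨h₂, l₂, m₂, m₂', rfl, rfl, hm₂⟩ := hB
  simp only [getLastD_cons_concat, List.headD_cons] at hx
  refine ⟨h₁ + 1, l₂ + 1, _, _, oplus_cons_concat .., ?_, hm₁.append (hx.append hm₂)⟩
  rw [oplus_cons_concat, Nat.add_right_comm h₁, Nat.add_right_comm l₂]
  simp

lemma ShiftRel.count_reduce {D D' : List ℕ} (hD : ShiftRel 0 1 D D') {k : ℕ} (hk : 5 ≤ k) :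
    (reduce D').count (k + 1) = (reduce D).count k := by
  obtain ⟨h, l, m, m', rfl, rfl, hm⟩ := hD
  simp only [reduce, getLastD_cons_concat, List.tail_cons, List.dropLast_concat, List.headD_cons,
    List.count_append, hm k hk, Nat.add_zero, ← Nat.add_assoc, countShift_singleton_succ (h + l) k hk]

lemma shiftRel_seed_left : ShiftRel 0 0 [1, 1] [1, 1] :=
  ⟨1, 1, [], [], rfl, rfl, countShift_of_forall_le (by simp) (by simp)⟩

lemma shiftRel_seed_right : ShiftRel 1 1 [1, 1] [2, 2, 2] :=
  ⟨1, 1, [], [2], rfl, rfl, countShift_of_forall_le (by simp) (by simp)⟩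

/-- Relates the pairs `(D(a/b), D(c/d))` reached along the same word from the pair of
`(0/1, 1/1)` and from that of `(0/1, 1/2)`; the latter is the former moved by `x ↦ x/(1+x)`. -/
def PairRel (P P' : List ℕ × List ℕ) : Prop :=
  ((P.1 = [1, 1] ∧ P'.1 = [1, 1]) ∨ ShiftRel 0 1 P.1 P'.1) ∧
  ((P.2 = [1, 1] ∧ P'.2 = [2, 2, 2]) ∨ ShiftRel 0 1 P.2 P'.2) ∧
  CountShift [P.1.getLastD 0 + P.2.headD 0] [P'.1.getLastD 0 + P'.2.headD 0]

lemma PairRel.shiftRel_oplus {P P' : List ℕ × List ℕ} (hP : PairRel P P') :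
    ShiftRel 0 1 (oplus P.1 P.2) (oplus P'.1 P'.2) := by
  obtain ⟨hA, hB, hx⟩ := hP
  obtain ⟨j, hA⟩ : ∃ j, ShiftRel 0 j P.1 P'.1 := by
    rcases hA with ⟨h, h'⟩ | hA
    · exact ⟨0, h ▸ h' ▸ shiftRel_seed_left⟩
    · exact ⟨1, hA⟩
  obtain ⟨i, hB⟩ : ∃ i, ShiftRel i 1 P.2 P'.2 := by
    rcases hB with ⟨h, h'⟩ | hB
    · exact ⟨1, h ▸ h' ▸ shiftRel_seed_right⟩
    · exact ⟨0, hB⟩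
  exact hA.oplus hB hx

lemma PairRel.step {P P' : List ℕ × List ℕ} (hP : PairRel P P') (σ : LR) :
    PairRel (degStep P σ) (degStep P' σ) := by
  obtain ⟨A, B⟩ := P
  obtain ⟨A', B'⟩ := P'
  have hAB := hP.shiftRel_oplus
  obtain ⟨hA, hB, -⟩ := hP
  cases σ
  · show PairRel (A, oplus A B) (A', oplus A' B')
    refine ⟨hA, Or.inr hAB, ?_⟩
    rcases hA with ⟨rfl, rfl⟩ | ⟨h, l, m, m', rfl, rfl, -⟩
    · exact countShift_of_forall_le (by simp [oplus]) (by simp [oplus])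
    · simp only [getLastD_cons_concat, headD_oplus_cons_concat, Nat.add_zero]
      rw [show l + 1 + (h + 1) = l + (h + 1) + 1 by omega]
      exact countShift_singleton_succ _
  · show PairRel (oplus A B, B) (oplus A' B', B')
    refine ⟨Or.inr hAB, hB, ?_⟩
    rcases hB with ⟨rfl, rfl⟩ | ⟨h, l, m, m', rfl, rfl, -⟩
    · -- the junction `3` becomes `5` next to the seed `[2, 2, 2]`: this is why `k ≥ 5`
      exact countShift_of_forall_le (by simp [oplus]) (by simp [oplus])
    · simp only [getLastD_oplus, getLastD_cons_concat, List.headD_cons, Nat.add_zero]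
      rw [show l + 1 + 1 + h = l + 1 + h + 1 by omega]
      exact countShift_singleton_succ _

lemma PairRel.foldl_degStep {P P' : List ℕ × List ℕ} (hP : PairRel P P') (v : List LR) :
    PairRel (v.foldl degStep P) (v.foldl degStep P') := by
  induction v generalizing P P' with
  | nil => exact hP
  | cons σ v ih => exact ih (hP.step σ)

lemma pairRel_init : PairRel ([1, 1], [1, 1]) ([1, 1], [2, 2, 2]) :=
  ⟨Or.inl ⟨rfl, rfl⟩, Or.inl ⟨rfl, rfl⟩, countShift_singleton_succ 2⟩

lemma count_degSeq_of_tail_eq {w w' : List LR} (h : w'.tail = LR.L :: w.tail) {k : ℕ}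
    (hk : 5 ≤ k) : (degSeq w').count (k + 1) = (degSeq w).count k := by
  have hP : PairRel (degPair w) (degPair w') := by
    rw [degPair, degPair, h, List.foldl_cons]
    exact PairRel.foldl_degStep pairRel_init _
  exact hP.shiftRel_oplus.count_reduce hk

theorem statement11_general (p q : ℕ)
    (k : ℕ) (hk : 5 ≤ k) (w w' : List LR)
    (hval : value w = (p, q)) (hval' : value w' = (p, p + q)) :
    ((degSeq w).count k : ℝ) / (q : ℝ)
      = (1 + (p : ℝ) / (q : ℝ)) * (((degSeq w').count (k + 1) : ℝ) / ((p : ℝ) + (q : ℝ))) := by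
  rw [count_degSeq_of_tail_eq (tail_eq_L_cons_of_value hval hval') hk]
  have hq : 0 < q := by simpa [hval] using value_snd_pos w
  field_simp
  ring

/-- for every irreducible fraction x = p/q ∈ (0,1) and every k ≥ 5, the
degree distributions of G_x and G_{F(x)} (with F(x) = x/(1+x) = p/(p+q)) satisfy the
scaling equation P(k, x) = (1 + x)·P(k+1, x/(1+x)). -/
theorem statement11 (p q : ℕ) (hcop : Nat.Coprime p q) (hp : 0 < p) (hpq : p < q)
    (k : ℕ) (hk : 5 ≤ k) (w w' : List LR) (hw : IsFareyWord w) (hw' : IsFareyWord w')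
    (hval : value w = (p, q)) (hval' : value w' = (p, p + q)) :
    ((degSeq w).count k : ℝ) / (q : ℝ)
      = (1 + (p : ℝ) / (q : ℝ)) * (((degSeq w').count (k + 1) : ℝ) / ((p : ℝ) + (q : ℝ))) :=
  statement11_general p q k hk w w' hval hval'
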